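/- With Leontief utilities, let P* and P be two profiles and let q be a distribution that maximizes the Nash product at P*. If for every agent i the set of critical alternatives of i under q with respect to P* equals the set of critical alternatives of i under q with respect to P, then q also maximizes the Nash product at P. -/

import Mathlib

/-- Leontief utility of an agent with peak `p` at distribution `q`:
the minimum of `q j / p j` over alternatives `j` with `p j > 0`. -/
noncomputable def leontief {m : ℕ} (p q : Fin m → ℝ) : ℝ :=
  sInf {x : ℝ | ∃ j, 0 < p j ∧ x = q j / p j}

-- The set of critical alternatives of an agent with peak `p` under distribution `q`:
-- the alternatives attaining the minimum of `q j / p j` over `j` with `p j > 0`.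
open Classical in
noncomputable def criticalSet {m : ℕ} (p q : Fin m → ℝ) : Finset (Fin m) :=
  Finset.univ.filter (fun j => 0 < p j ∧ ∀ k, 0 < p k → q j / p j ≤ q k / p k)

/-- `q` maximizes the Nash product of Leontief utilities at profile `P`. -/
def NashMax {m n : ℕ} (P : Fin n → Fin m → ℝ) (q : Fin m → ℝ) : Prop :=
  q ∈ stdSimplex ℝ (Fin m) ∧
    ∀ q' ∈ stdSimplex ℝ (Fin m), ∏ i, leontief (P i) q' ≤ ∏ i, leontief (P i) q

open Filter Topology Set

/-!
Write `ρ_i = min_{j ∈ T_{q,i}} q'_j / q_j`. Then `q` maximizes the Nash product exactly when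
`∑_i ρ_i ≤ n` for every distribution `q'`, a first-order condition that sees the profile only
through the critical sets. Necessity: along the segment `(1 - t) q + t q'` the utility of agent `i`
grows at least by the factor `1 + t (ρ_i - 1)`, and the product of these factors has derivative
`∑_i (ρ_i - 1)` at `t = 0`. Sufficiency: `u_i(q') ≤ ρ_i u_i(q)`, and `∏_i ρ_i ≤ 1` by AM-GM.
-/

lemma exists_pos_of_mem_stdSimplex {ι : Type*} [Fintype ι] {p : ι → ℝ}
    (hp : p ∈ stdSimplex ℝ ι) : ∃ j, 0 < p j := by
  by_contra! h
  have := hp.2 ▸ Finset.sum_nonpos fun j _ => h j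
  norm_num at this

lemma exists_forall_pos_mem_stdSimplex {ι : Type*} [Fintype ι] (h : (stdSimplex ℝ ι).Nonempty) :
    ∃ c ∈ stdSimplex ℝ ι, ∀ j, 0 < c j := by
  obtain ⟨p, hp⟩ := h
  have : Nonempty ι := let ⟨j, _⟩ := exists_pos_of_mem_stdSimplex hp; ⟨j⟩
  refine ⟨fun _ => (Fintype.card ι : ℝ)⁻¹, ⟨fun _ => by positivity, ?_⟩, fun _ => by positivity⟩
  simp

lemma prod_le_one_of_sum_le_card {ι : Type*} [Fintype ι] {ρ : ι → ℝ} (hρ : ∀ i, 0 ≤ ρ i)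
    (h : ∑ i, ρ i ≤ Fintype.card ι) : ∏ i, ρ i ≤ 1 :=
  calc ∏ i, ρ i
      ≤ ∏ i, Real.exp (ρ i - 1) :=
        Finset.prod_le_prod (fun i _ => hρ i) fun i _ => by
          linarith [Real.add_one_le_exp (ρ i - 1)]
    _ = Real.exp (∑ i, ρ i - Fintype.card ι) := by
        simp [← Real.exp_sum, Finset.sum_sub_distrib]
    _ ≤ 1 := Real.exp_le_one_iff.2 (sub_nonpos.2 h)

lemma HasDerivAt.nonpos_of_eventually_le {g : ℝ → ℝ} {g' a : ℝ} (hg : HasDerivAt g g' a)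
    (h : ∀ᶠ t in 𝓝[≥] a, g t ≤ g a) : g' ≤ 0 := by
  have hcone : (1 : ℝ) ∈ posTangentConeAt (Ici a) a :=
    mem_posTangentConeAt_of_segment_subset (by simp [segment_eq_Icc, Icc_subset_Ici_self])
  simpa using IsLocalMaxOn.hasFDerivWithinAt_nonpos h hg.hasFDerivAt.hasFDerivWithinAt hcone

lemma hasDerivAt_prod_one_add_mul {ι : Type*} [Fintype ι] (s : ι → ℝ) :
    HasDerivAt (fun t => ∏ i, (1 + t * s i)) (∑ i, s i) 0 := by
  classical
  have := HasDerivAt.fun_finsetProd (u := Finset.univ) (x := 0)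
    fun i _ => ((hasDerivAt_id (0 : ℝ)).mul_const (s i)).const_add 1
  simpa using this

section Leontief

variable {m : ℕ} {p q : Fin m → ℝ}

lemma mem_criticalSet {j : Fin m} :
    j ∈ criticalSet p q ↔ 0 < p j ∧ ∀ k, 0 < p k → q j / p j ≤ q k / p k := by
  classical
  simp [criticalSet]

lemma leontief_le {k : Fin m} (hk : 0 < p k) : leontief p q ≤ q k / p k := by
  have hfin : {x | ∃ j, 0 < p j ∧ x = q j / p j}.Finite :=
    (finite_range fun j => q j / p j).subset (by rintro _ ⟨j, _, rfl⟩; exact ⟨j, rfl⟩)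
  exact csInf_le hfin.bddBelow ⟨k, hk, rfl⟩

lemma le_leontief (hp : ∃ j, 0 < p j) {c : ℝ} (h : ∀ k, 0 < p k → c ≤ q k / p k) :
    c ≤ leontief p q :=
  let ⟨j, hj⟩ := hp
  le_csInf ⟨_, j, hj, rfl⟩ (by rintro _ ⟨k, hk, rfl⟩; exact h k hk)

lemma leontief_nonneg (hq : ∀ j, 0 ≤ q j) : 0 ≤ leontief p q :=
  Real.sInf_nonneg (by rintro _ ⟨k, hk, rfl⟩; exact div_nonneg (hq k) hk.le)

lemma exists_mem_criticalSet (hp : ∃ j, 0 < p j) : ∃ j, j ∈ criticalSet p q := by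
  classical
  obtain ⟨j, hj, hmin⟩ := (Finset.univ.filter (0 < p ·)).exists_min_image (fun j => q j / p j)
    (let ⟨j, hj⟩ := hp; ⟨j, by simpa using hj⟩)
  exact ⟨j, mem_criticalSet.2 ⟨(Finset.mem_filter.1 hj).2, fun k hk => hmin k (by simpa using hk)⟩⟩

lemma leontief_eq_of_mem_criticalSet {j : Fin m} (hj : j ∈ criticalSet p q) :
    leontief p q = q j / p j :=
  have hj := mem_criticalSet.1 hj
  le_antisymm (leontief_le hj.1) (le_leontief ⟨j, hj.1⟩ hj.2)

lemma leontief_lt_of_notMem_criticalSet {j : Fin m} (hpj : 0 < p j) (hj : j ∉ criticalSet p q) :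
    leontief p q < q j / p j :=
  (leontief_le hpj).lt_of_ne fun h => hj (mem_criticalSet.2 ⟨hpj, fun _ hk => h ▸ leontief_le hk⟩)

lemma leontief_pos_of_forall_pos (hp : ∃ j, 0 < p j) (hq : ∀ j, 0 < q j) : 0 < leontief p q := by
  obtain ⟨j, hj⟩ := exists_mem_criticalSet (q := q) hp
  rw [leontief_eq_of_mem_criticalSet hj]
  exact div_pos (hq j) (mem_criticalSet.1 hj).1

lemma pos_of_mem_criticalSet (hu : 0 < leontief p q) {j : Fin m} (hj : j ∈ criticalSet p q) :
    0 < q j := by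
  rw [leontief_eq_of_mem_criticalSet hj] at hu
  exact (div_pos_iff_of_pos_right (mem_criticalSet.1 hj).1).1 hu

lemma leontief_pos_of_mem_criticalSet {p' : Fin m → ℝ} (hu : 0 < leontief p q) {j : Fin m}
    (hj : j ∈ criticalSet p q) (hj' : j ∈ criticalSet p' q) : 0 < leontief p' q := by
  rw [leontief_eq_of_mem_criticalSet hj']
  exact div_pos (pos_of_mem_criticalSet hu hj) (mem_criticalSet.1 hj').1

lemma leontief_le_mul_of_mem_criticalSet {q' : Fin m → ℝ} {j : Fin m} (hj : j ∈ criticalSet p q)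
    (hqj : 0 < q j) : leontief p q' ≤ q' j / q j * leontief p q := by
  rw [leontief_eq_of_mem_criticalSet hj, div_mul_div_cancel₀ hqj.ne']
  exact leontief_le (mem_criticalSet.1 hj).1

/-- Only the critical alternatives matter: the others have slack at `q`, which survives small
moves. -/
lemma eventually_mul_le_leontief_segment (hp : ∃ j, 0 < p j) {q' : Fin m → ℝ} {ρ : ℝ}
    (hρ : ∀ j ∈ criticalSet p q, ρ * q j ≤ q' j) :
    ∀ᶠ t in 𝓝[≥] 0, leontief p q * (1 + t * (ρ - 1)) ≤ leontief p ((1 - t) • q + t • q') := by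
  suffices ∀ j, ∀ᶠ t in 𝓝[≥] (0 : ℝ), 0 < p j →
      leontief p q * (1 + t * (ρ - 1)) ≤ ((1 - t) * q j + t * q' j) / p j by
    filter_upwards [eventually_all.2 this] with t ht
    exact le_leontief hp fun k hk => by simpa using ht k hk
  intro j
  by_cases hj : j ∈ criticalSet p q
  · filter_upwards [self_mem_nhdsWithin] with t (ht : 0 ≤ t) hpj
    rw [leontief_eq_of_mem_criticalSet hj, div_mul_eq_mul_div, div_le_div_iff_of_pos_right hpj]
    nlinarith [hρ j hj]
  · by_cases hpj : 0 < p j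
    · have hlt := leontief_lt_of_notMem_criticalSet hpj hj
      have : ∀ᶠ t in 𝓝 (0 : ℝ), leontief p q * (1 + t * (ρ - 1)) <
          ((1 - t) * q j + t * q' j) / p j :=
        ContinuousAt.eventually_lt (by fun_prop) (by fun_prop) (by simpa using hlt)
      filter_upwards [nhdsWithin_le_nhds this] with t ht _ using ht.le
    · exact Eventually.of_forall fun _ h => absurd h hpj

end Leontief

section Nash

variable {m n : ℕ} {P : Fin n → Fin m → ℝ} {q : Fin m → ℝ}

/-- First-order optimality condition of the Nash product at `q` with critical sets `T`; `ρ i`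
ranges over lower bounds of `q' j / q j` on `T i` rather than over their minimum. -/
def IsNashStationary (T : Fin n → Finset (Fin m)) (q : Fin m → ℝ) : Prop :=
  ∀ q' ∈ stdSimplex ℝ (Fin m), ∀ ρ : Fin n → ℝ, (∀ i, ∀ j ∈ T i, ρ i * q j ≤ q' j) →
    ∑ i, ρ i ≤ n

lemma NashMax.leontief_pos (hP : ∀ i, ∃ j, 0 < P i j) (h : NashMax P q) (i : Fin n) :
    0 < leontief (P i) q := by
  obtain ⟨c, hc, hcpos⟩ := exists_forall_pos_mem_stdSimplex ⟨q, h.1⟩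
  have hprod : 0 < ∏ i, leontief (P i) q :=
    (Finset.prod_pos fun i _ => leontief_pos_of_forall_pos (hP i) hcpos).trans_le (h.2 c hc)
  refine (leontief_nonneg h.1.1).lt_of_ne' fun h0 => ?_
  rw [Finset.prod_eq_zero (Finset.mem_univ i) h0] at hprod
  exact hprod.false

lemma NashMax.isNashStationary (hP : ∀ i, ∃ j, 0 < P i j) (h : NashMax P q) :
    IsNashStationary (fun i => criticalSet (P i) q) q := by
  intro q' hq' ρ hρ
  have hprod : 0 < ∏ i, leontief (P i) q := Finset.prod_pos fun i _ => h.leontief_pos hP i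
  have hfactor : ∀ i, ∀ᶠ t in 𝓝[≥] (0 : ℝ), 0 ≤ 1 + t * (ρ i - 1) := fun i =>
    nhdsWithin_le_nhds <| (ContinuousAt.eventually_lt (f := fun _ => (0 : ℝ))
      continuousAt_const (by fun_prop) (by simp)).mono fun _ => le_of_lt
  have hmax : ∀ᶠ t in 𝓝[≥] (0 : ℝ), ∏ i, (1 + t * (ρ i - 1)) ≤ ∏ i, (1 + 0 * (ρ i - 1)) := by
    filter_upwards [eventually_all.2 fun i => eventually_mul_le_leontief_segment (hP i) (hρ i),
      eventually_all.2 hfactor, self_mem_nhdsWithin,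
      nhdsWithin_le_nhds (eventually_le_nhds zero_lt_one)] with t hu hfac (ht0 : 0 ≤ t) ht1
    have hqt : (1 - t) • q + t • q' ∈ stdSimplex ℝ (Fin m) :=
      convex_stdSimplex ℝ (Fin m) h.1 hq' (by linarith) ht0 (by ring)
    refine le_of_mul_le_mul_left ?_ hprod
    calc (∏ i, leontief (P i) q) * ∏ i, (1 + t * (ρ i - 1))
        = ∏ i, leontief (P i) q * (1 + t * (ρ i - 1)) := Finset.prod_mul_distrib.symm
      _ ≤ ∏ i, leontief (P i) ((1 - t) • q + t • q') :=
          Finset.prod_le_prod (fun i _ => mul_nonneg (leontief_nonneg h.1.1) (hfac i))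
            fun i _ => hu i
      _ ≤ ∏ i, leontief (P i) q := h.2 _ hqt
      _ = (∏ i, leontief (P i) q) * ∏ i, (1 + 0 * (ρ i - 1)) := by simp
  have := (hasDerivAt_prod_one_add_mul fun i => ρ i - 1).nonpos_of_eventually_le hmax
  simpa [Finset.sum_sub_distrib] using this

lemma NashMax.of_isNashStationary (hq : q ∈ stdSimplex ℝ (Fin m)) (hP : ∀ i, ∃ j, 0 < P i j)
    (hu : ∀ i, 0 < leontief (P i) q) (h : IsNashStationary (fun i => criticalSet (P i) q) q) :
    NashMax P q := by
  refine ⟨hq, fun q' hq' => ?_⟩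
  choose j hj hmin using fun i => (criticalSet (P i) q).exists_min_image (fun k => q' k / q k)
    (exists_mem_criticalSet (hP i))
  have hqpos : ∀ i, ∀ k ∈ criticalSet (P i) q, 0 < q k := fun i _ => pos_of_mem_criticalSet (hu i)
  set ρ : Fin n → ℝ := fun i => q' (j i) / q (j i)
  have hρ0 : ∀ i, 0 ≤ ρ i := fun i => div_nonneg (hq'.1 _) (hqpos i _ (hj i)).le
  have hsum : ∑ i, ρ i ≤ n :=
    h q' hq' ρ fun i k hk => (le_div_iff₀ (hqpos i k hk)).1 (hmin i k hk)
  calc ∏ i, leontief (P i) q'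
      ≤ ∏ i, ρ i * leontief (P i) q :=
        Finset.prod_le_prod (fun i _ => leontief_nonneg hq'.1)
          fun i _ => leontief_le_mul_of_mem_criticalSet (hj i) (hqpos i _ (hj i))
    _ = (∏ i, ρ i) * ∏ i, leontief (P i) q := Finset.prod_mul_distrib
    _ ≤ 1 * ∏ i, leontief (P i) q :=
        mul_le_mul_of_nonneg_right (prod_le_one_of_sum_le_card hρ0 (by simpa using hsum))
          (Finset.prod_nonneg fun i _ => (hu i).le)
    _ = ∏ i, leontief (P i) q := one_mul _

end Nash

theorem nash_max_transfer_general {m n : ℕ}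
    (Pstar P : Fin n → Fin m → ℝ)
    (hPstar : ∀ i, Pstar i ∈ stdSimplex ℝ (Fin m))
    (q : Fin m → ℝ) (hmax : NashMax Pstar q)
    (hcrit : ∀ i, criticalSet (Pstar i) q = criticalSet (P i) q) :
    NashMax P q := by
  have hPstar' : ∀ i, ∃ j, 0 < Pstar i j := fun i => exists_pos_of_mem_stdSimplex (hPstar i)
  have hu := hmax.leontief_pos hPstar'
  choose j hj using fun i => exists_mem_criticalSet (q := q) (hPstar' i)
  have hjP : ∀ i, j i ∈ criticalSet (P i) q := fun i => hcrit i ▸ hj i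
  refine NashMax.of_isNashStationary hmax.1 (fun i => ⟨j i, (mem_criticalSet.1 (hjP i)).1⟩)
    (fun i => leontief_pos_of_mem_criticalSet (hu i) (hj i) (hjP i)) ?_
  simpa only [hcrit] using hmax.isNashStationary hPstar'

/-- with Leontief utilities, if `q` maximizes the Nash product at `P*`
and every agent has the same critical alternatives under `q` with respect to `P*` and
to `P`, then `q` also maximizes the Nash product at `P`. -/
theorem nash_max_transfer {m n : ℕ}
    (Pstar P : Fin n → Fin m → ℝ)
    (hPstar : ∀ i, Pstar i ∈ stdSimplex ℝ (Fin m))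
    (hP : ∀ i, P i ∈ stdSimplex ℝ (Fin m))
    (q : Fin m → ℝ) (hmax : NashMax Pstar q)
    (hcrit : ∀ i, criticalSet (Pstar i) q = criticalSet (P i) q) :
    NashMax P q :=
  nash_max_transfer_general Pstar P hPstar q hmax hcrit
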